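/- The frame F of a finite set A ⊆ ℝ^m is the unique minimal subset of A generating the same VRS hull: for every S ⊆ A, vrs(S) = vrs(A) if and only if F ⊆ S. -/

import Mathlib

/-!
Write `vrs S` through weights: `z ∈ vrs S` iff `z ≤ ∑ b, l b • b` for a probability vector `l`
on `S`. If `a` is an extreme point of `vrs S`, dominated by `y = ∑ b, l b • b`, then `a` is the
midpoint of `y` and `2a - y ∈ vrs S`, so `a = y ∈ convexHull S`; being extreme there, `a ∈ S`.
Hence `vrs S = vrs A` forces `frame A ⊆ S`.

Conversely, if `a ∈ A` is not extreme, `a = t x₁ + s x₂` with `x₁ ≠ a`, and combining the weights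
of `x₁, x₂` gives `a ≤ ∑ b, μ b • b` with `μ a ≤ 1`. If `μ a = 1` all weight sits on `a`, so
`x₁, x₂ ≤ a`, which forces `x₁ = a`; hence `μ a < 1` and renormalising the other weights puts `a`
in `vrs (A \ {a})`. Deleting such points one at a time changes neither the hull nor the frame,
so `vrs (frame A) = vrs A`.
-/

open scoped Classical
open Finset

noncomputable section

/-- The VRS (free-disposal convex) hull of a finite set of points in ℝ^m. -/
def vrs {m : ℕ} (S : Finset (Fin m → ℝ)) : Set (Fin m → ℝ) :=
  {z | ∃ l : (Fin m → ℝ) → ℝ, (∀ a, 0 ≤ l a) ∧ (∑ a ∈ S, l a) = 1 ∧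
    ∀ k, z k ≤ ∑ a ∈ S, l a * a k}

/-- The frame of `A`: the points of `A` that are extreme points of `vrs A`. -/
def frame {m : ℕ} (A : Finset (Fin m → ℝ)) : Finset (Fin m → ℝ) :=
  A.filter fun a => a ∈ Set.extremePoints ℝ (vrs A)

section OrderedModule

variable {E : Type*} [AddCommGroup E] [PartialOrder E] [IsOrderedAddMonoid E] [Module ℝ E]
  [PosSMulMono ℝ E]

lemma smul_add_smul_le_sum_smul {S : Finset E} {l₁ l₂ : E → ℝ} {x₁ x₂ : E} {t s : ℝ}
    (ht : 0 ≤ t) (hs : 0 ≤ s) (h₁ : x₁ ≤ ∑ a ∈ S, l₁ a • a) (h₂ : x₂ ≤ ∑ a ∈ S, l₂ a • a) :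
    t • x₁ + s • x₂ ≤ ∑ a ∈ S, (t * l₁ a + s * l₂ a) • a :=
  calc t • x₁ + s • x₂ ≤ t • ∑ a ∈ S, l₁ a • a + s • ∑ a ∈ S, l₂ a • a := by gcongr
    _ = ∑ a ∈ S, (t * l₁ a + s * l₂ a) • a := by
      simp only [Finset.smul_sum, smul_smul, ← Finset.sum_add_distrib, add_smul]

lemma left_eq_of_mem_openSegment_of_le {x y a : E} (h : a ∈ openSegment ℝ x y)
    (hx : x ≤ a) (hy : y ≤ a) : x = a := by
  obtain ⟨t, s, ht, hs, hts, hxy⟩ := h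
  have hsum : t • x + s • y = t • a + s • a := by rw [hxy, Convex.combo_self hts]
  have htx : t • x = t • a :=
    ((add_eq_add_iff_eq_and_eq (smul_le_smul_of_nonneg_left hx ht.le)
      (smul_le_smul_of_nonneg_left hy hs.le)).1 hsum).1
  exact smul_right_injective E ht.ne' htx

end OrderedModule

lemma sum_smul_eq_of_weight_eq_one {E : Type*} [AddCommMonoid E] [Module ℝ E] {S : Finset E}
    {l : E → ℝ} {a : E} (ha : a ∈ S) (hl0 : ∀ b, 0 ≤ l b) (hl1 : ∑ b ∈ S, l b = 1)
    (hla : l a = 1) : ∑ b ∈ S, l b • b = a := by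
  have hrest : ∑ b ∈ S.erase a, l b = 0 := by linarith [Finset.add_sum_erase S l ha]
  rw [Finset.sum_eq_single_of_mem a ha fun b hb hba => ?_, hla, one_smul]
  have hb0 : l b = 0 := le_antisymm
    (hrest ▸ Finset.single_le_sum (fun c _ => hl0 c) (Finset.mem_erase.2 ⟨hba, hb⟩)) (hl0 b)
  rw [hb0, zero_smul]

variable {m : ℕ}

lemma mem_vrs_iff {S : Finset (Fin m → ℝ)} {z : Fin m → ℝ} :
    z ∈ vrs S ↔ ∃ l : (Fin m → ℝ) → ℝ, (∀ a, 0 ≤ l a) ∧ ∑ a ∈ S, l a = 1 ∧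
      z ≤ ∑ a ∈ S, l a • a := by
  simp only [vrs, Set.mem_ofPred_eq, Pi.le_def, Finset.sum_apply, Pi.smul_apply, smul_eq_mul]

lemma mem_vrs_of_mem {S : Finset (Fin m → ℝ)} {a : Fin m → ℝ} (ha : a ∈ S) : a ∈ vrs S :=
  mem_vrs_iff.2 ⟨fun b => if b = a then 1 else 0, fun b => by positivity,
    by simp [Finset.sum_ite_eq', ha], by simp [ite_smul, Finset.sum_ite_eq', ha]⟩

lemma vrs_subset_vrs {S T : Finset (Fin m → ℝ)} (h : ∀ a ∈ S, a ∈ vrs T) : vrs S ⊆ vrs T := by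
  intro z hz
  obtain ⟨l, hl0, hl1, hz⟩ := mem_vrs_iff.1 hz
  choose! g hg0 hg1 hg using fun a ha => mem_vrs_iff.1 (h a ha)
  refine mem_vrs_iff.2 ⟨fun b => ∑ a ∈ S, l a * g a b,
    fun b => Finset.sum_nonneg fun a ha => mul_nonneg (hl0 a) (hg0 a ha b), ?_, ?_⟩
  · rw [Finset.sum_comm, ← hl1]
    exact Finset.sum_congr rfl fun a ha => by rw [← Finset.mul_sum, hg1 a ha, mul_one]
  · calc z ≤ ∑ a ∈ S, l a • a := hz
      _ ≤ ∑ a ∈ S, l a • ∑ b ∈ T, g a b • b := by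
          gcongr with a ha
          · exact hl0 a
          · exact hg a ha
      _ = ∑ b ∈ T, (∑ a ∈ S, l a * g a b) • b := by
          simp only [Finset.smul_sum, smul_smul, Finset.sum_smul]
          exact Finset.sum_comm

lemma vrs_mono {S T : Finset (Fin m → ℝ)} (h : S ⊆ T) : vrs S ⊆ vrs T :=
  vrs_subset_vrs fun _ ha => mem_vrs_of_mem (h ha)

lemma convex_vrs (S : Finset (Fin m → ℝ)) : Convex ℝ (vrs S) := by
  rintro x hx y hy t s ht hs hts
  obtain ⟨l₁, hl₁0, hl₁1, hx⟩ := mem_vrs_iff.1 hx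
  obtain ⟨l₂, hl₂0, hl₂1, hy⟩ := mem_vrs_iff.1 hy
  refine mem_vrs_iff.2 ⟨fun a => t * l₁ a + s * l₂ a,
    fun a => add_nonneg (mul_nonneg ht (hl₁0 a)) (mul_nonneg hs (hl₂0 a)), ?_,
    smul_add_smul_le_sum_smul ht hs hx hy⟩
  rw [Finset.sum_add_distrib, ← Finset.mul_sum, ← Finset.mul_sum, hl₁1, hl₂1, mul_one, mul_one,
    hts]

lemma convexHull_subset_vrs (S : Finset (Fin m → ℝ)) :
    convexHull ℝ (S : Set (Fin m → ℝ)) ⊆ vrs S :=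
  convexHull_min (fun _ ha => mem_vrs_of_mem ha) (convex_vrs S)

lemma mem_of_mem_extremePoints_vrs {S : Finset (Fin m → ℝ)} {a : Fin m → ℝ}
    (ha : a ∈ (vrs S).extremePoints ℝ) : a ∈ S := by
  obtain ⟨l, hl0, hl1, hle⟩ := mem_vrs_iff.1 ha.1
  set y := ∑ b ∈ S, l b • b
  have hy : y ∈ vrs S := mem_vrs_iff.2 ⟨l, hl0, hl1, le_rfl⟩
  have hy' : (2 : ℝ) • a - y ∈ vrs S := mem_vrs_iff.2 ⟨l, hl0, hl1, by
    rw [two_smul, sub_le_iff_le_add]; exact add_le_add hle hle⟩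
  have hya : y = a := ha.2 hy hy' ⟨1 / 2, 1 / 2, by norm_num, by norm_num, by norm_num, by module⟩
  have hconv : a ∈ convexHull ℝ (S : Set (Fin m → ℝ)) :=
    Finset.mem_convexHull'.2 ⟨l, fun b _ => hl0 b, hl1, hya⟩
  exact_mod_cast extremePoints_convexHull_subset
    (inter_extremePoints_subset_extremePoints_of_subset (convexHull_subset_vrs S) ⟨hconv, ha⟩)

lemma mem_vrs_erase_of_le_sum_smul {A : Finset (Fin m → ℝ)} {a : Fin m → ℝ}
    {l : (Fin m → ℝ) → ℝ} (ha : a ∈ A) (hl0 : ∀ b, 0 ≤ l b) (hl1 : ∑ b ∈ A, l b = 1)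
    (hla : l a < 1) (hle : a ≤ ∑ b ∈ A, l b • b) : a ∈ vrs (A.erase a) := by
  have hd : 0 < 1 - l a := sub_pos.2 hla
  have hrest : ∑ b ∈ A.erase a, l b = 1 - l a := by linarith [Finset.add_sum_erase A l ha]
  refine mem_vrs_iff.2 ⟨fun b => (1 - l a)⁻¹ * l b,
    fun b => mul_nonneg (inv_nonneg.2 hd.le) (hl0 b), ?_, ?_⟩
  · rw [← Finset.mul_sum, hrest, inv_mul_cancel₀ hd.ne']
  · simp only [← smul_smul, ← Finset.smul_sum]
    rw [le_inv_smul_iff_of_pos hd, sub_smul, one_smul, sub_le_iff_le_add']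
    rwa [Finset.add_sum_erase A (fun b => l b • b) ha]

lemma mem_vrs_erase_of_not_mem_extremePoints {A : Finset (Fin m → ℝ)} {a : Fin m → ℝ}
    (ha : a ∈ A) (hnex : a ∉ (vrs A).extremePoints ℝ) : a ∈ vrs (A.erase a) := by
  obtain ⟨x₁, hx₁, x₂, hx₂, hseg, hne⟩ : ∃ x₁ ∈ vrs A, ∃ x₂ ∈ vrs A,
      a ∈ openSegment ℝ x₁ x₂ ∧ x₁ ≠ a := by
    simpa [Set.extremePoints, mem_vrs_of_mem ha] using hnex
  obtain ⟨l₁, hl₁0, hl₁1, hx₁⟩ := mem_vrs_iff.1 hx₁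
  obtain ⟨l₂, hl₂0, hl₂1, hx₂⟩ := mem_vrs_iff.1 hx₂
  obtain ⟨t, s, ht, hs, hts, hxa⟩ := id hseg
  have hle : a ≤ ∑ b ∈ A, (t * l₁ b + s * l₂ b) • b :=
    hxa ▸ smul_add_smul_le_sum_smul ht.le hs.le hx₁ hx₂
  have hl₁a : l₁ a ≤ 1 := hl₁1 ▸ Finset.single_le_sum (fun b _ => hl₁0 b) ha
  have hl₂a : l₂ a ≤ 1 := hl₂1 ▸ Finset.single_le_sum (fun b _ => hl₂0 b) ha
  rcases (show t * l₁ a + s * l₂ a ≤ 1 by nlinarith).lt_or_eq with hlt | hone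
  · refine mem_vrs_erase_of_le_sum_smul ha
      (fun b => add_nonneg (mul_nonneg ht.le (hl₁0 b)) (mul_nonneg hs.le (hl₂0 b))) ?_ hlt hle
    rw [Finset.sum_add_distrib, ← Finset.mul_sum, ← Finset.mul_sum, hl₁1, hl₂1, mul_one,
      mul_one, hts]
  · have hx₁a : x₁ ≤ a := sum_smul_eq_of_weight_eq_one ha hl₁0 hl₁1 (by nlinarith) ▸ hx₁
    have hx₂a : x₂ ≤ a := sum_smul_eq_of_weight_eq_one ha hl₂0 hl₂1 (by nlinarith) ▸ hx₂
    exact absurd (left_eq_of_mem_openSegment_of_le hseg hx₁a hx₂a) hne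

lemma vrs_erase_eq {A : Finset (Fin m → ℝ)} {a : Fin m → ℝ} (ha : a ∈ vrs (A.erase a)) :
    vrs (A.erase a) = vrs A := by
  refine (vrs_mono (Finset.erase_subset a A)).antisymm (vrs_subset_vrs fun b hb => ?_)
  by_cases hba : b = a
  · exact hba ▸ ha
  · exact mem_vrs_of_mem (Finset.mem_erase.2 ⟨hba, hb⟩)

lemma mem_vrs_frame {A : Finset (Fin m → ℝ)} {a : Fin m → ℝ} (ha : a ∈ A) :
    a ∈ vrs (frame A) := by
  induction A using Finset.strongInduction generalizing a with
  | _ A ih =>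
    by_cases hext : a ∈ (vrs A).extremePoints ℝ
    · exact mem_vrs_of_mem (Finset.mem_filter.2 ⟨ha, hext⟩)
    · have herase : a ∈ vrs (A.erase a) := mem_vrs_erase_of_not_mem_extremePoints ha hext
      have hframe : frame (A.erase a) = frame A := by
        rw [frame, vrs_erase_eq herase, Finset.filter_erase,
          Finset.erase_eq_of_notMem fun h => hext (Finset.mem_filter.1 h).2, frame]
      exact hframe ▸ vrs_subset_vrs (fun b hb => ih _ (Finset.erase_ssubset ha) hb) herase

lemma vrs_frame (A : Finset (Fin m → ℝ)) : vrs (frame A) = vrs A :=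
  (vrs_mono (Finset.filter_subset _ A)).antisymm (vrs_subset_vrs fun _ => mem_vrs_frame)

theorem stmt3 {m : ℕ} (A S : Finset (Fin m → ℝ)) (hS : S ⊆ A) :
    vrs S = vrs A ↔ frame A ⊆ S := by
  refine ⟨fun h a ha => ?_, fun hF => (vrs_mono hS).antisymm ?_⟩
  · exact mem_of_mem_extremePoints_vrs (h ▸ (Finset.mem_filter.1 ha).2)
  · exact vrs_frame A ▸ vrs_mono hF
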